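/- If (1/β) > (1/n)·Σ_{i=1}^n |z − z_i|² for all z in a convex open set Ω ⊂ ℝ^d, then the free energy F(·,β) = −(1/β)·log(Σ_i exp(−(β/2)|·−z_i|²)) is convex on Ω. -/

import Mathlib

open Real Finset

/-! Along a line `t ↦ x + t • v`, the Gaussian weight `eᵢ = exp (-(β/2) ‖x - zᵢ‖²)` has second
derivative `β (β ⟪x - zᵢ, v⟫² - ‖v‖²) eᵢ ≤ β ‖v‖² (β ‖x - zᵢ‖² - 1) eᵢ` by Cauchy–Schwarz. The weights
decrease with the distance, so by Chebyshev's sum inequality the Gibbs average of `‖x - zᵢ‖²` is at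
most its plain average, which is below `1/β`. Hence `Z` is concave on `Ω`, so `log Z` is concave and
`F = -(1/β) log Z` is convex. -/

section Convexity

variable {E : Type*} [AddCommGroup E] [Module ℝ E] {s : Set E} {f : E → ℝ}

theorem ConcaveOn.log (hf : ConcaveOn ℝ s f) (hpos : ∀ x ∈ s, 0 < f x) :
    ConcaveOn ℝ s fun x => Real.log (f x) := by
  refine ⟨hf.1, fun x hx y hy a b ha hb hab => ?_⟩
  have hlog := strictConcaveOn_log_Ioi.concaveOn
  calc a • Real.log (f x) + b • Real.log (f y)
      ≤ Real.log (a • f x + b • f y) :=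
        hlog.2 (hpos x hx) (hpos y hy) ha hb hab
    _ ≤ Real.log (f (a • x + b • y)) :=
        log_le_log (hlog.1 (hpos x hx) (hpos y hy) ha hb hab) (hf.2 hx hy ha hb hab)

theorem concaveOn_of_concaveOn_segment (hs : Convex ℝ s)
    (h : ∀ x ∈ s, ∀ y ∈ s, ConcaveOn ℝ (Set.Icc 0 1) fun t : ℝ => f (x + t • (y - x))) :
    ConcaveOn ℝ s f := by
  refine ⟨hs, fun x hx y hy a b ha hb hab => ?_⟩
  have hseg := (h x hx y hy).2 (by simp : (0 : ℝ) ∈ Set.Icc 0 1) (by simp : (1 : ℝ) ∈ Set.Icc 0 1)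
    ha hb hab
  obtain rfl : a = 1 - b := by linarith
  have hxy : (1 - b) • x + b • y = x + b • (y - x) := by
    rw [sub_smul, one_smul, smul_sub]; abel
  simpa [hxy] using hseg

end Convexity

section Chebyshev

variable {ι : Type*} [Fintype ι]

theorem card_mul_sum_mul_exp_le {c : ℝ} (hc : 0 ≤ c) (q : ι → ℝ) :
    Fintype.card ι * ∑ i, q i * exp (-c * q i) ≤ (∑ i, q i) * ∑ i, exp (-c * q i) := by
  have hanti : Antivary q fun i => exp (-c * q i) := fun i j hij => by
    have := exp_lt_exp.1 hij
    nlinarith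
  simpa using hanti.card_mul_sum_le_sum_mul_sum

theorem mul_sum_mul_exp_le_sum_exp {β : ℝ} (hβ : 0 ≤ β) (q : ι → ℝ)
    (hq : β * ∑ i, q i ≤ Fintype.card ι) :
    β * ∑ i, q i * exp (-(β / 2) * q i) ≤ ∑ i, exp (-(β / 2) * q i) := by
  cases isEmpty_or_nonempty ι
  · simp
  have hcard : (0 : ℝ) < Fintype.card ι := by exact_mod_cast Fintype.card_pos
  have hexp : 0 ≤ ∑ i, exp (-(β / 2) * q i) := sum_nonneg fun i _ => (exp_pos _).le
  refine le_of_mul_le_mul_left ?_ hcard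
  calc (Fintype.card ι : ℝ) * (β * ∑ i, q i * exp (-(β / 2) * q i))
      = β * (Fintype.card ι * ∑ i, q i * exp (-(β / 2) * q i)) := by ring
    _ ≤ β * ((∑ i, q i) * ∑ i, exp (-(β / 2) * q i)) :=
        mul_le_mul_of_nonneg_left (card_mul_sum_mul_exp_le (by positivity) q) hβ
    _ ≤ Fintype.card ι * ∑ i, exp (-(β / 2) * q i) := by
        rw [← mul_assoc]; exact mul_le_mul_of_nonneg_right hq hexp

end Chebyshev

theorem hasDerivAt_add_smul_sub {E : Type*} [NormedAddCommGroup E] [NormedSpace ℝ E]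
    (x v z : E) (t : ℝ) : HasDerivAt (fun t : ℝ => x + t • v - z) v t := by
  simpa using (((hasDerivAt_id t).smul_const v).const_add x).sub_const z

noncomputable def partitionFunction {E ι : Type*} [SeminormedAddCommGroup E] [Fintype ι]
    (z : ι → E) (β : ℝ) (x : E) : ℝ :=
  ∑ i, exp (-(β / 2) * ‖x - z i‖ ^ 2)

theorem partitionFunction_pos {E ι : Type*} [SeminormedAddCommGroup E] [Fintype ι] [Nonempty ι]
    (z : ι → E) (β : ℝ) (x : E) : 0 < partitionFunction z β x :=
  sum_pos (fun _ _ => exp_pos _) univ_nonempty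

section InnerProductSpace

variable {E : Type*} [NormedAddCommGroup E] [InnerProductSpace ℝ E]

theorem hasDerivAt_exp_neg_norm_sq_line (β : ℝ) (x v z : E) (t : ℝ) :
    HasDerivAt (fun t : ℝ => exp (-(β / 2) * ‖x + t • v - z‖ ^ 2))
      (-β * inner ℝ (x + t • v - z) v * exp (-(β / 2) * ‖x + t • v - z‖ ^ 2)) t :=
  ((hasDerivAt_add_smul_sub x v z t).norm_sq.const_mul (-(β / 2))).exp.congr_deriv (by ring)

theorem hasDerivAt_deriv_exp_neg_norm_sq_line (β : ℝ) (x v z : E) (t : ℝ) :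
    HasDerivAt (fun t : ℝ => -β * inner ℝ (x + t • v - z) v * exp (-(β / 2) * ‖x + t • v - z‖ ^ 2))
      (β * (β * inner ℝ (x + t • v - z) v ^ 2 - ‖v‖ ^ 2) *
        exp (-(β / 2) * ‖x + t • v - z‖ ^ 2)) t := by
  have hinner :=
    ((hasDerivAt_add_smul_sub x v z t).inner ℝ (hasDerivAt_const t v)).const_mul (-β)
  refine (hinner.mul (hasDerivAt_exp_neg_norm_sq_line β x v z t)).congr_deriv ?_
  rw [inner_zero_right, zero_add, real_inner_self_eq_norm_sq]
  ring

theorem inner_sq_le_norm_sq_mul_norm_sq (x y : E) : inner ℝ x y ^ 2 ≤ ‖x‖ ^ 2 * ‖y‖ ^ 2 := by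
  rw [← mul_pow, ← sq_abs]
  exact pow_le_pow_left₀ (abs_nonneg _) (abs_real_inner_le_norm x y) 2

variable {ι : Type*} [Fintype ι]

theorem sum_gaussian_second_deriv_nonpos {β : ℝ} (hβ : 0 ≤ β) (w : ι → E) (v : E)
    (hw : β * ∑ i, ‖w i‖ ^ 2 ≤ Fintype.card ι) :
    ∑ i, β * (β * inner ℝ (w i) v ^ 2 - ‖v‖ ^ 2) * exp (-(β / 2) * ‖w i‖ ^ 2) ≤ 0 := by
  set e : ι → ℝ := fun i => exp (-(β / 2) * ‖w i‖ ^ 2)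
  calc ∑ i, β * (β * inner ℝ (w i) v ^ 2 - ‖v‖ ^ 2) * e i
      ≤ ∑ i, β * ‖v‖ ^ 2 * (β * ‖w i‖ ^ 2 - 1) * e i := by
        refine sum_le_sum fun i _ => mul_le_mul_of_nonneg_right ?_ (exp_pos _).le
        nlinarith [mul_le_mul_of_nonneg_left (inner_sq_le_norm_sq_mul_norm_sq (w i) v) hβ]
    _ = β * ‖v‖ ^ 2 * (β * ∑ i, ‖w i‖ ^ 2 * e i - ∑ i, e i) := by
        rw [mul_sum, ← sum_sub_distrib, mul_sum]
        exact sum_congr rfl fun i _ => by ring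
    _ ≤ 0 := mul_nonpos_of_nonneg_of_nonpos (by positivity)
        (sub_nonpos.2 (mul_sum_mul_exp_le_sum_exp hβ _ hw))

theorem concaveOn_partitionFunction (z : ι → E) {β : ℝ} (hβ : 0 ≤ β) {s : Set E}
    (hs : Convex ℝ s) (hbound : ∀ x ∈ s, β * ∑ i, ‖x - z i‖ ^ 2 ≤ Fintype.card ι) :
    ConcaveOn ℝ s (partitionFunction z β) := by
  refine concaveOn_of_concaveOn_segment hs fun x hx y hy => ?_
  have hd1 := fun t => HasDerivAt.fun_sum (u := univ) fun i _ =>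
    hasDerivAt_exp_neg_norm_sq_line β x (y - x) (z i) t
  have hd2 := fun t => HasDerivAt.fun_sum (u := univ) fun i _ =>
    hasDerivAt_deriv_exp_neg_norm_sq_line β x (y - x) (z i) t
  refine concaveOn_of_hasDerivWithinAt2_nonpos (convex_Icc 0 1)
    (fun t _ => (hd1 t).continuousAt.continuousWithinAt)
    (fun t _ => (hd1 t).hasDerivWithinAt) (fun t _ => (hd2 t).hasDerivWithinAt) ?_
  intro t ht
  rw [interior_Icc] at ht
  exact sum_gaussian_second_deriv_nonpos hβ _ _
    (hbound _ (hs.add_smul_sub_mem hx hy (Set.Ioo_subset_Icc_self ht)))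

end InnerProductSpace

theorem free_energy_convex_general
    {d n : ℕ} (zdata : Fin n → EuclideanSpace ℝ (Fin d)) (hn : 0 < n)
    (β : ℝ) (hβ : 0 < β)
    (F : EuclideanSpace ℝ (Fin d) → ℝ)
    (hF : ∀ z, F z = -(1 / β) * log (∑ i, exp (-(β / 2) * ‖z - zdata i‖ ^ 2)))
    (Ω : Set (EuclideanSpace ℝ (Fin d))) (hΩconv : Convex ℝ Ω)
    (hbound : ∀ z ∈ Ω, 1 / β > (1 / (n : ℝ)) * ∑ i, ‖z - zdata i‖ ^ 2) :
    ConvexOn ℝ Ω F := by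
  have : Nonempty (Fin n) := ⟨⟨0, hn⟩⟩
  have hbound' : ∀ z ∈ Ω, β * ∑ i, ‖z - zdata i‖ ^ 2 ≤ Fintype.card (Fin n) := by
    intro z hz
    have h := hbound z hz
    rw [gt_iff_lt, one_div_mul_eq_div, div_lt_div_iff₀ (by exact_mod_cast hn) hβ] at h
    rw [Fintype.card_fin]
    linarith
  have hlogZ := (concaveOn_partitionFunction zdata hβ.le hΩconv hbound').log
    fun z _ => partitionFunction_pos zdata β z
  have hFeq : F = fun z => (1 / β) • -log (partitionFunction zdata β z) := by
    funext z
    rw [hF, smul_eq_mul, partitionFunction]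
    ring
  rw [hFeq]
  exact hlogZ.neg.smul (by positivity)

/-- If 1/β > (1/n) Σᵢ |z−zᵢ|² on a convex open set Ω, then F(·,β) is convex on Ω. -/
theorem free_energy_convex
    {d n : ℕ} (zdata : Fin n → EuclideanSpace ℝ (Fin d)) (hn : 0 < n)
    (β : ℝ) (hβ : 0 < β)
    (F : EuclideanSpace ℝ (Fin d) → ℝ)
    (hF : ∀ z, F z = -(1 / β) * log (∑ i, exp (-(β / 2) * ‖z - zdata i‖ ^ 2)))
    (Ω : Set (EuclideanSpace ℝ (Fin d))) (hΩconv : Convex ℝ Ω) (hΩopen : IsOpen Ω)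
    (hbound : ∀ z ∈ Ω, 1 / β > (1 / (n : ℝ)) * ∑ i, ‖z - zdata i‖ ^ 2) :
    ConvexOn ℝ Ω F :=
  free_energy_convex_general zdata hn β hβ F hF Ω hΩconv hbound
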